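/- arXiv:2305.10810 — 3 statements merged into one kernel-verified Lean document; each statement's English description precedes it below -/
import Mathlib

section
/- Let $f:\mathbb{R}^d\to\mathbb{R}$ be differentiable, $\mu$-strongly convex, and have $L$-Lipschitz gradient. Let $x^*$ be the minimizer of $f$ and let $x_c,\tilde x\in\mathbb{R}^d$ and $\alpha\in(0,1/L]$. Then the point $x^+=\tilde x-\alpha\nabla f(\tilde x)$ satisfies $\|x^+-x_c\|^2 \le (1-\alpha\mu)\|\tilde x - x_c\|^2 + \alpha L\|x_c - x^*\|^2$. -/
/-!
Expand the square. Strong convexity at `x̃` controls the cross term by `f x̃ - f x_c`, and the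
descent lemma bounds `α ‖∇f x̃‖²` by `2 (f x̃ - f x*)`, since a gradient step of length `1 / L`
from `x̃` lowers `f` by at least `‖∇f x̃‖² / (2L)`. What remains is `2α (f x_c - f x*)`, and the
descent lemma at the critical point `x*` bounds it by `α L ‖x_c - x*‖²`.
-/

open scoped RealInnerProductSpace
open InnerProductSpace

section LipschitzGradient

variable {E : Type*} [NormedAddCommGroup E] [InnerProductSpace ℝ E] [CompleteSpace E]
  {f : E → ℝ} {g : E → E} {L : ℝ}

theorem image_le_add_inner_add_of_lipschitz_gradient (hgrad : ∀ x, HasGradientAt f (g x) x)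
    (hlip : ∀ x y, ‖g x - g y‖ ≤ L * ‖x - y‖) (x y : E) :
    f y ≤ f x + ⟪g x, y - x⟫ + L / 2 * ‖y - x‖ ^ 2 := by
  set v := y - x
  set φ : ℝ → ℝ := fun t => f (x + t • v) - t * ⟪g x, v⟫ - L / 2 * t ^ 2 * ‖v‖ ^ 2
  set φ' : ℝ → ℝ := fun t => ⟪g (x + t • v) - g x, v⟫ - L * t * ‖v‖ ^ 2
  have hline : ∀ t : ℝ, HasDerivAt (fun t : ℝ => f (x + t • v)) ⟪g (x + t • v), v⟫ t := by
    intro t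
    have := (hgrad (x + t • v)).hasFDerivAt.comp_hasDerivAt t
      (((hasDerivAt_id t).smul_const v).const_add x)
    simp only [id_eq, one_smul, toDual_apply_apply] at this
    exact this
  have hφ : ∀ t, HasDerivAt φ (φ' t) t := fun t =>
    (((hline t).sub ((hasDerivAt_id t).mul_const ⟪g x, v⟫)).sub
      (((hasDerivAt_pow 2 t).const_mul (L / 2)).mul_const (‖v‖ ^ 2))).congr_deriv
      (by simp only [φ', inner_sub_left]; ring)
  have hφ'_nonpos : ∀ t, 0 ≤ t → φ' t ≤ 0 := by
    intro t ht
    have : ⟪g (x + t • v) - g x, v⟫ ≤ L * t * ‖v‖ ^ 2 := calc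
      _ ≤ ‖g (x + t • v) - g x‖ * ‖v‖ := real_inner_le_norm _ _
      _ ≤ L * ‖(x + t • v) - x‖ * ‖v‖ := by gcongr; exact hlip _ _
      _ = L * t * ‖v‖ ^ 2 := by
        rw [add_sub_cancel_left, norm_smul, Real.norm_of_nonneg ht]; ring
    exact sub_nonpos.mpr this
  have hanti : AntitoneOn φ (Set.Icc 0 1) :=
    antitoneOn_of_hasDerivWithinAt_nonpos (convex_Icc 0 1)
      (fun t _ => (hφ t).continuousAt.continuousWithinAt)
      (fun t _ => (hφ t).hasDerivWithinAt)
      (fun t ht => hφ'_nonpos t (interior_subset ht).1)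
  have h10 : φ 1 ≤ φ 0 := hanti (by simp) (by simp) zero_le_one
  simp only [φ, one_smul, zero_smul, add_zero, add_sub_cancel, v] at h10
  linarith

theorem image_sub_inv_smul_gradient_le (hgrad : ∀ x, HasGradientAt f (g x) x)
    (hlip : ∀ x y, ‖g x - g y‖ ≤ L * ‖x - y‖) (x : E) :
    f (x - L⁻¹ • g x) ≤ f x - ‖g x‖ ^ 2 / (2 * L) := by
  have h := image_le_add_inner_add_of_lipschitz_gradient hgrad hlip x (x - L⁻¹ • g x)
  have hcoef : L / 2 * (L⁻¹) ^ 2 = L⁻¹ / 2 := by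
    rcases eq_or_ne L 0 with rfl | hL
    · simp
    · field_simp
  rw [sub_sub_cancel_left, inner_neg_right, real_inner_smul_right, real_inner_self_eq_norm_sq,
    norm_neg, norm_smul, mul_pow, Real.norm_eq_abs, sq_abs, ← mul_assoc, hcoef] at h
  have : ‖g x‖ ^ 2 / (2 * L) = L⁻¹ / 2 * ‖g x‖ ^ 2 := by ring
  linarith

end LipschitzGradient

theorem gradient_step_contraction_general {d : ℕ}
    (f : EuclideanSpace ℝ (Fin d) → ℝ)
    (g : EuclideanSpace ℝ (Fin d) → EuclideanSpace ℝ (Fin d))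
    (μ L : ℝ)
    (xstar : EuclideanSpace ℝ (Fin d))
    (hgrad : ∀ x, HasGradientAt f (g x) x)
    (hsc : ∀ x y, f y + ⟪g y, x - y⟫ + μ / 2 * ‖x - y‖ ^ 2 ≤ f x)
    (hlip : ∀ x y, ‖g x - g y‖ ≤ L * ‖x - y‖)
    (hmin : ∀ x, f xstar ≤ f x)
    (α : ℝ) (hα1 : 0 < α) (hα2 : α ≤ 1 / L)
    (xc xt : EuclideanSpace ℝ (Fin d)) :
    ‖(xt - α • g xt) - xc‖ ^ 2
      ≤ (1 - α * μ) * ‖xt - xc‖ ^ 2 + α * L * ‖xc - xstar‖ ^ 2 := by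
  have hg_star : g xstar = 0 :=
    (toDual ℝ _).map_eq_zero_iff.mp <|
      IsLocalMin.hasFDerivAt_eq_zero (Filter.Eventually.of_forall hmin) (hgrad xstar).hasFDerivAt
  have hgap : f xc - f xstar ≤ L / 2 * ‖xc - xstar‖ ^ 2 := by
    have := image_le_add_inner_add_of_lipschitz_gradient hgrad hlip xstar xc
    rw [hg_star, inner_zero_left, add_zero] at this
    linarith
  have hstep : α * ‖g xt‖ ^ 2 ≤ 2 * (f xt - f xstar) := calc
    α * ‖g xt‖ ^ 2 ≤ 1 / L * ‖g xt‖ ^ 2 := by gcongr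
    _ = 2 * (‖g xt‖ ^ 2 / (2 * L)) := by ring
    _ ≤ 2 * (f xt - f (xt - L⁻¹ • g xt)) := by
      linarith [image_sub_inv_smul_gradient_le hgrad hlip xt]
    _ ≤ 2 * (f xt - f xstar) := by linarith [hmin (xt - L⁻¹ • g xt)]
  have hsc_xt : f xt - f xc + μ / 2 * ‖xt - xc‖ ^ 2 ≤ ⟪g xt, xt - xc⟫ := by
    have := hsc xc xt
    rw [← neg_sub xt xc, inner_neg_right, norm_neg] at this
    linarith
  calc ‖(xt - α • g xt) - xc‖ ^ 2
      = ‖xt - xc‖ ^ 2 - 2 * α * ⟪g xt, xt - xc⟫ + α * (α * ‖g xt‖ ^ 2) := by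
        rw [sub_right_comm, norm_sub_sq_real, real_inner_smul_right, norm_smul,
          Real.norm_of_nonneg hα1.le, real_inner_comm]
        ring
    _ ≤ (1 - α * μ) * ‖xt - xc‖ ^ 2 + 2 * α * (f xc - f xstar) := by
        linarith [mul_le_mul_of_nonneg_left hstep hα1.le, mul_le_mul_of_nonneg_left hsc_xt hα1.le]
    _ ≤ (1 - α * μ) * ‖xt - xc‖ ^ 2 + α * L * ‖xc - xstar‖ ^ 2 := by
        linarith [mul_le_mul_of_nonneg_left hgap hα1.le]

/-- One gradient-descent step contraction: the descent inequality used in the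
convergence proof. -/
theorem gradient_step_contraction {d : ℕ}
    (f : EuclideanSpace ℝ (Fin d) → ℝ)
    (g : EuclideanSpace ℝ (Fin d) → EuclideanSpace ℝ (Fin d))
    (μ L : ℝ) (hμ : 0 < μ) (hμL : μ ≤ L)
    (xstar : EuclideanSpace ℝ (Fin d))
    (hgrad : ∀ x, HasGradientAt f (g x) x)
    (hsc : ∀ x y, f y + ⟪g y, x - y⟫ + μ / 2 * ‖x - y‖ ^ 2 ≤ f x)
    (hlip : ∀ x y, ‖g x - g y‖ ≤ L * ‖x - y‖)
    (hmin : ∀ x, f xstar ≤ f x)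
    (α : ℝ) (hα1 : 0 < α) (hα2 : α ≤ 1 / L)
    (xc xt : EuclideanSpace ℝ (Fin d)) :
    ‖(xt - α • g xt) - xc‖ ^ 2
      ≤ (1 - α * μ) * ‖xt - xc‖ ^ 2 + α * L * ‖xc - xstar‖ ^ 2 :=
  gradient_step_contraction_general f g μ L xstar hgrad hsc hlip hmin α hα1 hα2 xc xt
end

section
/- Let $0<\tilde\mu\le\tilde L$, $\gamma\ge 1$, $\alpha\in(\tfrac1{\tilde\mu}(1-\tfrac1\gamma),\tfrac1{\tilde L}]$, $r_c\ge 0$, $\beta=\sqrt{1-\alpha\tilde\mu}$, and define $R^*=\frac{r_c\sqrt{\alpha\tilde L}}{1-\beta\sqrt{\gamma}}$. Then $R^*\ge \frac{\tilde L}{\tilde\mu}\,r_c$. -/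
/-- The convergence radius `R*` is at least `(L̃/μ̃) r_c` under reduction Type-II. -/
theorem Rstar_ge (μt Lt γ α rc β Rstar : ℝ)
    (hμ : 0 < μt) (hμL : μt ≤ Lt)
    (hγ : 1 ≤ γ)
    (hα1 : (1 / μt) * (1 - 1 / γ) < α) (hα2 : α ≤ 1 / Lt)
    (hrc : 0 ≤ rc)
    (hβ : β = Real.sqrt (1 - α * μt))
    (hR : Rstar = rc * Real.sqrt (α * Lt) / (1 - β * Real.sqrt γ)) :
    (Lt / μt) * rc ≤ Rstar := by
  have hL : 0 < Lt := lt_of_lt_of_le hμ hμL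
  have hγ0 : 0 < γ := by linarith
  have hinvγ : 1 / γ ≤ 1 := by
    rw [div_le_one hγ0]; exact hγ
  have hα0 : 0 < α := by
    have : 0 ≤ (1 / μt) * (1 - 1 / γ) := mul_nonneg (by positivity) (by linarith)
    linarith
  have hαL1 : α * Lt ≤ 1 := by
    have := (le_div_iff₀ hL).mp hα2
    linarith
  have hαμ1 : α * μt ≤ 1 := by nlinarith
  have h1 : 1 - α * μt < 1 / γ := by
    have h := (div_lt_iff₀ hμ).mp (by rwa [div_mul_eq_mul_div, one_mul] at hα1)
    linarith
  have hnn : 0 ≤ 1 - α * μt := by linarith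
  have hβ0 : 0 ≤ β := hβ ▸ Real.sqrt_nonneg _
  have hβ2 : β ^ 2 = 1 - α * μt := by
    rw [hβ, Real.sq_sqrt hnn]
  have hβ1 : β ≤ 1 := by nlinarith
  -- β * √γ < 1
  have hsγ : 1 ≤ Real.sqrt γ := by
    rw [show (1:ℝ) = Real.sqrt 1 by simp]
    exact Real.sqrt_le_sqrt hγ
  have hβγ : β * Real.sqrt γ < 1 := by
    have hmul : β * Real.sqrt γ = Real.sqrt ((1 - α * μt) * γ) := by
      rw [hβ, Real.sqrt_mul hnn]
    rw [hmul]
    have harg : (1 - α * μt) * γ < 1 := by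
      have := (mul_lt_mul_of_pos_right h1 hγ0)
      rw [div_mul_cancel₀ 1 (ne_of_gt hγ0)] at this
      exact this
    calc Real.sqrt ((1 - α * μt) * γ) < Real.sqrt 1 :=
          Real.sqrt_lt_sqrt (by positivity) harg
      _ = 1 := by simp
  have hpos : 0 < 1 - β * Real.sqrt γ := by linarith
  -- 1 - β√γ ≤ 1 - β ≤ αμ
  have h2 : 1 - β * Real.sqrt γ ≤ α * μt := by
    have : β ≤ β * Real.sqrt γ := le_mul_of_one_le_right hβ0 hsγ
    nlinarith
  -- αL ≤ √(αL)
  have h3 : α * Lt ≤ Real.sqrt (α * Lt) := by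
    have h4 : (α * Lt) * (α * Lt) ≤ α * Lt :=
      mul_le_of_le_one_right (by positivity) hαL1
    nlinarith [Real.sq_sqrt (show (0:ℝ) ≤ α * Lt by positivity),
      Real.sqrt_nonneg (α * Lt), sq_nonneg (Real.sqrt (α * Lt) - α * Lt)]
  rw [hR, le_div_iff₀ hpos]
  have key : (Lt / μt) * (1 - β * Real.sqrt γ) ≤ Real.sqrt (α * Lt) := by
    have : (Lt / μt) * (1 - β * Real.sqrt γ) ≤ (Lt / μt) * (α * μt) := by
      apply mul_le_mul_of_nonneg_left h2 (by positivity)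
    have heq : (Lt / μt) * (α * μt) = α * Lt := by field_simp
    linarith [heq ▸ this]
  calc (Lt / μt) * rc * (1 - β * Real.sqrt γ)
      = rc * ((Lt / μt) * (1 - β * Real.sqrt γ)) := by ring
    _ ≤ rc * Real.sqrt (α * Lt) := mul_le_mul_of_nonneg_left key hrc
end

section
/- Let $\gamma\in[0,1)$, $r_c\ge 0$, $\kappa\ge 1$, and consider $R^*(\tilde\alpha)=\frac{r_c\sqrt{\kappa}\sqrt{\tilde\alpha}}{1-\sqrt{\gamma}\sqrt{1-\tilde\alpha}}$ for $\tilde\alpha\in(0,1]$. Then $R^*(\tilde\alpha)\le \frac{r_c\sqrt{\kappa}}{\sqrt{1-\gamma}}$ for all $\tilde\alpha\in(0,1]$, with the maximum attained at $\tilde\alpha=1-\gamma$. -/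
/-- For `γ ∈ [0,1)`, the normalized convergence radius is bounded by
`r_c √κ / √(1-γ)` on `(0,1]`, with the maximum attained at `α̃ = 1 - γ`. -/
theorem normalized_radius_bound (γ rc κ : ℝ)
    (hγ0 : 0 ≤ γ) (hγ1 : γ < 1) (hrc : 0 ≤ rc) (hκ : 1 ≤ κ) :
    (∀ a ∈ Set.Ioc (0 : ℝ) 1,
      rc * Real.sqrt κ * Real.sqrt a / (1 - Real.sqrt γ * Real.sqrt (1 - a))
        ≤ rc * Real.sqrt κ / Real.sqrt (1 - γ)) ∧
    rc * Real.sqrt κ * Real.sqrt (1 - γ)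
        / (1 - Real.sqrt γ * Real.sqrt (1 - (1 - γ)))
      = rc * Real.sqrt κ / Real.sqrt (1 - γ) := by
  have hγ' : (0:ℝ) < 1 - γ := by linarith
  have hκ0 : (0:ℝ) ≤ Real.sqrt κ := Real.sqrt_nonneg _
  have hrcκ : 0 ≤ rc * Real.sqrt κ := mul_nonneg hrc hκ0
  constructor
  · rintro a ⟨ha0, ha1⟩
    set x := Real.sqrt γ with hxd
    set y := Real.sqrt (1 - γ) with hyd
    set u := Real.sqrt a with hud
    set v := Real.sqrt (1 - a) with hvd
    have hx2 : x ^ 2 = γ := Real.sq_sqrt hγ0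
    have hy2 : y ^ 2 = 1 - γ := Real.sq_sqrt (le_of_lt hγ')
    have hu2 : u ^ 2 = a := Real.sq_sqrt (le_of_lt ha0)
    have hv2 : v ^ 2 = 1 - a := Real.sq_sqrt (by linarith)
    have hx0 : 0 ≤ x := Real.sqrt_nonneg _
    have hy0 : 0 < y := Real.sqrt_pos.mpr hγ'
    have hu0 : 0 ≤ u := Real.sqrt_nonneg _
    have hv0 : 0 ≤ v := Real.sqrt_nonneg _
    have hx1 : x < 1 := by
      rw [hxd, show (1:ℝ) = Real.sqrt 1 by simp]
      exact Real.sqrt_lt_sqrt hγ0 hγ1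
    have hv1 : v ≤ 1 := Real.sqrt_le_one.mpr (by linarith)
    have key : x * v + y * u ≤ 1 := by
      nlinarith [sq_nonneg (x * u - y * v), sq_nonneg (x * v + y * u)]
    have hden : 0 < 1 - x * v := by nlinarith
    rw [div_le_div_iff₀ hden hy0]
    nlinarith [mul_le_mul_of_nonneg_left key hrcκ]
  · have h1 : 1 - (1 - γ) = γ := by ring
    rw [h1, Real.mul_self_sqrt hγ0]
    rw [div_eq_div_iff hγ'.ne' (Real.sqrt_pos.mpr hγ').ne']
    rw [mul_assoc, Real.mul_self_sqrt (le_of_lt hγ')]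
end
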